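/- Second-order product rule: Let X be a real locally convex topological vector space, f : X → ℝ, g : X → ℝ, x ∈ X and η₁, η₂ ∈ X. Suppose f and g have chain differentials in the direction η₁ at every point of a neighbourhood of x, have chain differentials at x in the direction η₂, and have second-order chain differentials δ²f(x; η₁, η₂) and δ²g(x; η₁, η₂). Then f · g has a second-order chain differential at x in the directions η₁, η₂, and δ²(f · g)(x; η₁, η₂) = δ²f(x; η₁, η₂) · g(x) + δf(x; η₁) · δg(x; η₂) + δf(x; η₂) · δg(x; η₁) + f(x) · δ²g(x; η₁, η₂). -/

import Mathlib

/-!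
This is the first-order product rule applied twice: near `x`,
`δ(fg)(y; η₁) = δf(y; η₁) g(y) + f(y) δg(y; η₁)`, and differentiating this in the direction `η₂`
at `x` gives the four terms. Chain differentials are unique, so the first-order differentials
carried by `δ²f` and `δ²g` agree at `x` with `Df₁ x` and `Dg₁ x`.
-/

open Filter Topology

/-- `f` has chain differential `v` at the point `x` in the direction `η`:
for every sequence `ηm → η` and every sequence of nonzero reals `θm → 0`,
`θm⁻¹ • (f (x + θm • ηm) - f x) → v`. -/
def HasChainDiff {X Y : Type*} [AddCommGroup X] [Module ℝ X] [TopologicalSpace X]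
    [AddCommGroup Y] [Module ℝ Y] [TopologicalSpace Y]
    (f : X → Y) (x η : X) (v : Y) : Prop :=
  ∀ (ηm : ℕ → X) (θm : ℕ → ℝ), Tendsto ηm atTop (𝓝 η) → (∀ m, θm m ≠ 0) →
    Tendsto θm atTop (𝓝 (0 : ℝ)) →
    Tendsto (fun m => (θm m)⁻¹ • (f (x + θm m • ηm m) - f x)) atTop (𝓝 v)

/-- `n`-th order chain differential, defined recursively: `δⁿ f(x; η₁,…,ηₙ)` is the
chain differential of `y ↦ δ^{n-1} f(y; η₁,…,η_{n-1})` (a function defined on a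
neighbourhood of `x`) at `x` in the direction `ηₙ`; by convention `δ⁰ f(x) = f x`. -/
def HasChainDiffN {X Y : Type*} [AddCommGroup X] [Module ℝ X] [TopologicalSpace X]
    [AddCommGroup Y] [Module ℝ Y] [TopologicalSpace Y]
    (f : X → Y) : (n : ℕ) → (Fin n → X) → X → Y → Prop
  | 0, _, x, v => f x = v
  | n + 1, η, x, v => ∃ D : X → Y,
      (∀ᶠ y in 𝓝 x, HasChainDiffN f n (Fin.init η) y (D y)) ∧
      HasChainDiff D x (η (Fin.last n)) v

/-- The directions `(η_i)_{i ∈ I}`, listed in increasing order of the index. -/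
def dirsOf {X : Type*} {n : ℕ} (η : Fin n → X) (I : Finset (Fin n)) : Fin I.card → X :=
  fun j => η ((I.orderIsoOfFin rfl j : I) : Fin n)

section ChainDiff

variable {X Y : Type*} [AddCommGroup X] [Module ℝ X] [TopologicalSpace X]
  [AddCommGroup Y] [Module ℝ Y] [TopologicalSpace Y]

theorem tendsto_add_smul_of_tendsto_zero [IsTopologicalAddGroup X] [ContinuousSMul ℝ X]
    {ηm : ℕ → X} {θm : ℕ → ℝ} {η : X} (x : X)
    (hη : Tendsto ηm atTop (𝓝 η)) (hθ : Tendsto θm atTop (𝓝 0)) :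
    Tendsto (fun m => x + θm m • ηm m) atTop (𝓝 x) := by
  simpa using tendsto_const_nhds.add (hθ.smul hη)

theorem HasChainDiff.congr_of_eventuallyEq [IsTopologicalAddGroup X] [ContinuousSMul ℝ X]
    {f g : X → Y} {x η : X} {v : Y} (h : HasChainDiff f x η v) (hfg : f =ᶠ[𝓝 x] g) :
    HasChainDiff g x η v := by
  intro ηm θm hη hθ hθ0
  refine (h ηm θm hη hθ hθ0).congr' ?_
  filter_upwards [(tendsto_add_smul_of_tendsto_zero x hη hθ0).eventually hfg] with m hm
  rw [hm, hfg.self_of_nhds]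

theorem HasChainDiff.unique [T2Space Y] {f : X → Y} {x η : X} {v w : Y}
    (hv : HasChainDiff f x η v) (hw : HasChainDiff f x η w) : v = w := by
  have hθ : Tendsto (fun m : ℕ => 1 / ((m : ℝ) + 1)) atTop (𝓝 0) :=
    tendsto_one_div_add_atTop_nhds_zero_nat
  have hθ_ne (m : ℕ) : 1 / ((m : ℝ) + 1) ≠ 0 := by positivity
  exact tendsto_nhds_unique (hv _ _ tendsto_const_nhds hθ_ne hθ)
    (hw _ _ tendsto_const_nhds hθ_ne hθ)

theorem HasChainDiff.add [IsTopologicalAddGroup Y] {f g : X → Y} {x η : X} {v w : Y}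
    (hf : HasChainDiff f x η v) (hg : HasChainDiff g x η w) :
    HasChainDiff (fun y => f y + g y) x η (v + w) := by
  intro ηm θm hη hθ hθ0
  refine ((hf ηm θm hη hθ hθ0).add (hg ηm θm hη hθ hθ0)).congr fun m => ?_
  rw [← smul_add, add_sub_add_comm]

theorem HasChainDiff.tendsto_apply [IsTopologicalAddGroup Y] [ContinuousSMul ℝ Y]
    {f : X → Y} {x η : X} {v : Y} (h : HasChainDiff f x η v)
    {ηm : ℕ → X} {θm : ℕ → ℝ} (hη : Tendsto ηm atTop (𝓝 η)) (hθ : ∀ m, θm m ≠ 0)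
    (hθ0 : Tendsto θm atTop (𝓝 0)) :
    Tendsto (fun m => f (x + θm m • ηm m)) atTop (𝓝 (f x)) := by
  have h_incr := tendsto_const_nhds (x := f x) |>.add (hθ0.smul (h ηm θm hη hθ hθ0))
  rw [zero_smul, add_zero] at h_incr
  refine h_incr.congr fun m => ?_
  rw [smul_inv_smul₀ (hθ m), add_sub_cancel]

theorem HasChainDiff.mul {A : Type*} [Ring A] [Algebra ℝ A] [TopologicalSpace A]
    [IsTopologicalRing A] [ContinuousSMul ℝ A] {f g : X → A} {x η : X} {v w : A}
    (hf : HasChainDiff f x η v) (hg : HasChainDiff g x η w) :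
    HasChainDiff (fun y => f y * g y) x η (v * g x + f x * w) := by
  intro ηm θm hη hθ hθ0
  have h_lim := ((hf ηm θm hη hθ hθ0).mul (hg.tendsto_apply hη hθ hθ0)).add
    (tendsto_const_nhds (x := f x) |>.mul (hg ηm θm hη hθ hθ0))
  refine h_lim.congr fun m => ?_
  rw [smul_mul_assoc, mul_smul_comm, ← smul_add, sub_mul, mul_sub, sub_add_sub_cancel]

theorem hasChainDiffN_one_iff [IsTopologicalAddGroup X] [ContinuousSMul ℝ X]
    {f : X → Y} {η : Fin 1 → X} {x : X} {v : Y} :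
    HasChainDiffN f 1 η x v ↔ HasChainDiff f x (η 0) v := by
  constructor
  · rintro ⟨D, hfD, hD⟩
    exact hD.congr_of_eventuallyEq (hfD.mono fun _ h => h.symm)
  · exact fun h => ⟨f, Eventually.of_forall fun _ => rfl, h⟩

theorem hasChainDiffN_two_iff [IsTopologicalAddGroup X] [ContinuousSMul ℝ X]
    {f : X → Y} {η : Fin 2 → X} {x : X} {v : Y} :
    HasChainDiffN f 2 η x v ↔
      ∃ D : X → Y, (∀ᶠ y in 𝓝 x, HasChainDiff f y (η 0) (D y)) ∧ HasChainDiff D x (η 1) v :=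
  exists_congr fun _ =>
    (eventually_congr (.of_forall fun _ => hasChainDiffN_one_iff)).and Iff.rfl

end ChainDiff

theorem product_rule_second_order_general
    {X : Type*}
    [AddCommGroup X] [Module ℝ X] [TopologicalSpace X] [IsTopologicalAddGroup X]
    [ContinuousSMul ℝ X]
    (f g : X → ℝ) (x η₁ η₂ : X)
    (Df₁ Dg₁ : X → ℝ) (f₂ g₂ d2f d2g : ℝ)
    (hf₁ : ∀ᶠ y in 𝓝 x, HasChainDiff f y η₁ (Df₁ y))
    (hg₁ : ∀ᶠ y in 𝓝 x, HasChainDiff g y η₁ (Dg₁ y))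
    (hf₂ : HasChainDiff f x η₂ f₂) (hg₂ : HasChainDiff g x η₂ g₂)
    (h2f : HasChainDiffN f 2 ![η₁, η₂] x d2f)
    (h2g : HasChainDiffN g 2 ![η₁, η₂] x d2g) :
    HasChainDiffN (fun y => f y * g y) 2 ![η₁, η₂] x
      (d2f * g x + Df₁ x * g₂ + f₂ * Dg₁ x + f x * d2g) := by
  obtain ⟨Df, hDf, hDf₂⟩ := hasChainDiffN_two_iff.mp h2f
  obtain ⟨Dg, hDg, hDg₂⟩ := hasChainDiffN_two_iff.mp h2g
  have hDf_x : Df x = Df₁ x := hDf.self_of_nhds.unique hf₁.self_of_nhds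
  have hDg_x : Dg x = Dg₁ x := hDg.self_of_nhds.unique hg₁.self_of_nhds
  refine hasChainDiffN_two_iff.mpr ⟨fun y => Df y * g y + f y * Dg y, ?_, ?_⟩
  · filter_upwards [hDf, hDg] with y hfy hgy using hfy.mul hgy
  · rw [← hDf_x, ← hDg_x, add_assoc]
    exact (hDf₂.mul hg₂).add (hf₂.mul hDg₂)

/-- Second-order product rule for chain differentials. -/
theorem product_rule_second_order
    {X : Type*}
    [AddCommGroup X] [Module ℝ X] [TopologicalSpace X] [IsTopologicalAddGroup X]
    [ContinuousSMul ℝ X] [LocallyConvexSpace ℝ X]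
    (f g : X → ℝ) (x η₁ η₂ : X)
    (Df₁ Dg₁ : X → ℝ) (f₂ g₂ d2f d2g : ℝ)
    (hf₁ : ∀ᶠ y in 𝓝 x, HasChainDiff f y η₁ (Df₁ y))
    (hg₁ : ∀ᶠ y in 𝓝 x, HasChainDiff g y η₁ (Dg₁ y))
    (hf₂ : HasChainDiff f x η₂ f₂) (hg₂ : HasChainDiff g x η₂ g₂)
    (h2f : HasChainDiffN f 2 ![η₁, η₂] x d2f)
    (h2g : HasChainDiffN g 2 ![η₁, η₂] x d2g) :
    HasChainDiffN (fun y => f y * g y) 2 ![η₁, η₂] x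
      (d2f * g x + Df₁ x * g₂ + f₂ * Dg₁ x + f x * d2g) :=
  product_rule_second_order_general f g x η₁ η₂ Df₁ Dg₁ f₂ g₂ d2f d2g hf₁ hg₁ hf₂ hg₂ h2f h2g
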